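/- For a simplicial group G, the simplicial map H : Diag NG × Δ^1 → Diag NG of the preceding construction is a simplicial homotopy from D_G S_G to id_{Diag NG}: ins_0 H = D_G S_G and ins_1 H = id, where ins_0, ins_1 insert the two vertices of Δ^1. -/

import Mathlib

namespace Paper

/-- clamped coface map `δ^k : [a] → [b]`. -/
def δOH (k a b : ℕ) : Fin (a+1) →o Fin (b+1) where
  toFun i := ⟨min (if (i:ℕ) < k then (i:ℕ) else (i:ℕ)+1) b, Nat.lt_succ_of_le (Nat.min_le_right _ _)⟩
  monotone' := by
    intro i j hij
    have h : (i:ℕ) ≤ (j:ℕ) := hij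
    simp only [Fin.mk_le_mk]
    split_ifs <;> omega

/-- clamped codegeneracy map `σ^k : [a] → [b]`. -/
def σOH (k a b : ℕ) : Fin (a+1) →o Fin (b+1) where
  toFun i := ⟨min (if (i:ℕ) ≤ k then (i:ℕ) else (i:ℕ)-1) b, Nat.lt_succ_of_le (Nat.min_le_right _ _)⟩
  monotone' := by
    intro i j hij
    have h : (i:ℕ) ≤ (j:ℕ) := hij
    simp only [Fin.mk_le_mk]
    split_ifs <;> omega

/-- `τ^k : [n] → [1]`, sending `[0, n-k]` to `0` and the rest to `1`. -/
def τOH (n k : ℕ) : Fin (n+1) →o Fin 2 where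
  toFun i := if (i:ℕ) + k ≤ n then 0 else 1
  monotone' := by
    intro i j hij
    have h : (i:ℕ) ≤ (j:ℕ) := hij
    dsimp only
    split_ifs with h1 h2 h3
    · exact le_refl _
    · exact Fin.zero_le _
    · exact absurd h3 (by omega)
    · exact le_refl _

/-- application of `θ : [m] → [n]` to a natural number (clamped). -/
def fApp {m n : ℕ} (θ : Fin (m+1) →o Fin (n+1)) (x : ℕ) : ℕ :=
  (θ ⟨min x m, Nat.lt_succ_of_le (Nat.min_le_right _ _)⟩ : Fin (n+1))

theorem fApp_mono {m n : ℕ} (θ : Fin (m+1) →o Fin (n+1)) {x y : ℕ} (h : x ≤ y) :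
    fApp θ x ≤ fApp θ y :=
  Fin.le_def.mp (θ.monotone (Fin.mk_le_mk.mpr (by omega)))

theorem fApp_le {m n : ℕ} (θ : Fin (m+1) →o Fin (n+1)) (x : ℕ) : fApp θ x ≤ n :=
  Nat.lt_succ_iff.mp (Fin.isLt _)

theorem fApp_coe {m n : ℕ} (θ : Fin (m+1) →o Fin (n+1)) (p : Fin (m+1)) :
    fApp θ (p:ℕ) = (θ p : ℕ) := by
  have hp : (⟨min (p:ℕ) m, Nat.lt_succ_of_le (Nat.min_le_right _ _)⟩ : Fin (m+1)) = p :=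
    Fin.ext (show min (p:ℕ) m = (p:ℕ) from by have := p.isLt; omega)
  unfold fApp
  rw [hp]

/-- `Spl_{≤ p}(θ) : [p] → [pθ]`. -/
def splLe {m n : ℕ} (θ : Fin (m+1) →o Fin (n+1)) (p : Fin (m+1)) :
    Fin ((p:ℕ)+1) →o Fin ((θ p : ℕ)+1) where
  toFun i := ⟨fApp θ (i:ℕ), by
    have h1 : fApp θ (i:ℕ) ≤ fApp θ (p:ℕ) := fApp_mono θ (by have := i.isLt; omega)
    have h2 : fApp θ (p:ℕ) = (θ p : ℕ) := fApp_coe θ p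
    omega⟩
  monotone' := by
    intro a b hab
    have h : (a:ℕ) ≤ (b:ℕ) := hab
    simp only [Fin.mk_le_mk]
    exact fApp_mono θ h

/-- `Spl_{≥ p}(θ) : [m-p] → [n-pθ]`. -/
def splGe {m n : ℕ} (θ : Fin (m+1) →o Fin (n+1)) (p : Fin (m+1)) :
    Fin (m - (p:ℕ) + 1) →o Fin (n - (θ p : ℕ) + 1) where
  toFun i := ⟨fApp θ ((i:ℕ) + (p:ℕ)) - (θ p : ℕ), by
    have h1 : fApp θ ((i:ℕ) + (p:ℕ)) ≤ n := fApp_le θ _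
    omega⟩
  monotone' := by
    intro a b hab
    have h : (a:ℕ) ≤ (b:ℕ) := hab
    simp only [Fin.mk_le_mk]
    have := fApp_mono θ (show (a:ℕ) + (p:ℕ) ≤ (b:ℕ) + (p:ℕ) by omega)
    omega

/-- the restriction `θ|_[i]^[j] : [i] → [j]` of `θ` (clamped). -/
def restrictOH {m n : ℕ} (θ : Fin (m+1) →o Fin (n+1)) (i j : ℕ) : Fin (i+1) →o Fin (j+1) where
  toFun k := ⟨min (fApp θ (k:ℕ)) j, Nat.lt_succ_of_le (Nat.min_le_right _ _)⟩
  monotone' := by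
    intro a b hab
    have h : (a:ℕ) ≤ (b:ℕ) := hab
    simp only [Fin.mk_le_mk]
    have := fApp_mono θ h
    omega

/-- ascending product `f a * f (a+1) * ⋯ * f (b-1)`. -/
def aProd {γ : Type*} [Monoid γ] (f : ℕ → γ) (a : ℕ) : ℕ → γ
  | 0 => 1
  | b+1 => if a ≤ b then aProd f a b * f b else 1

/-- descending product `f (b-1) * f (b-2) * ⋯ * f a`. -/
def dProd {γ : Type*} [Monoid γ] (f : ℕ → γ) (a : ℕ) : ℕ → γ
  | 0 => 1
  | b+1 => if a ≤ b then f b * dProd f a b else 1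

end Paper
namespace Paper

/-- A simplicial group, given by levels, structure maps, functoriality,
and levelwise multiplicativity. -/
structure SGrp where
  obj : ℕ → Type
  grp : ∀ n, Group (obj n)
  map : ∀ {m n : ℕ}, (Fin (m+1) →o Fin (n+1)) → obj n → obj m
  map_id : ∀ {n : ℕ} (x : obj n), map OrderHom.id x = x
  map_comp : ∀ {l m n : ℕ} (α : Fin (l+1) →o Fin (m+1)) (β : Fin (m+1) →o Fin (n+1)) (x : obj n),
    map α (map β x) = map (β.comp α) x
  map_mul : ∀ {m n : ℕ} (θ : Fin (m+1) →o Fin (n+1)) (x y : obj n),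
    map θ (x * y) = map θ x * map θ y

attribute [instance] SGrp.grp

namespace SGrp

/-- face `d_k : G_N → G_{N-1}` -/
def face (G : SGrp) (k : ℕ) {N : ℕ} : G.obj N → G.obj (N-1) := G.map (δOH k (N-1) N)

/-- degeneracy `s_k : G_M → G_{M+1}` -/
def deg (G : SGrp) (k : ℕ) {M : ℕ} : G.obj M → G.obj (M+1) := G.map (σOH k (M+1) M)

/-- transport between levels (junk value `1` when levels differ). -/
def gcast (G : SGrp) {a : ℕ} (b : ℕ) (x : G.obj a) : G.obj b := if h : a = b then h ▸ x else 1

/-- descending composite of faces `d_{i+c} d_{i+c-1} ⋯ d_{i+1}`. -/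
def dcomp (G : SGrp) : (i c : ℕ) → {N : ℕ} → G.obj N → G.obj (N - c)
  | _, 0, _, x => x
  | i, c+1, _, x => G.face (i+1) (G.dcomp (i+1) c x)

/-- ascending composite of degeneracies `s_i s_{i+1} ⋯ s_{i+c-1}`. -/
def scomp (G : SGrp) : (i c : ℕ) → {M : ℕ} → G.obj M → G.obj (M + c)
  | _, 0, _, x => x
  | i, c+1, _, x => G.deg (i+c) (G.scomp i c x)

/-- `x ↦ x d_j ⋯ d_{i+1} s_i ⋯ s_{j-1}`, an endomap of `G_N`. -/
def ds (G : SGrp) (i j : ℕ) {N : ℕ} (x : G.obj N) : G.obj N :=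
  G.gcast N (G.scomp i (min (j - i) N) (G.dcomp i (min (j - i) N) x))

/-- `x ↦ x d_j ⋯ d_{i+1} s_i ⋯ s_{n-1} : G_j → G_n`. -/
def dsTo (G : SGrp) (i n : ℕ) {j : ℕ} (x : G.obj j) : G.obj n :=
  G.gcast n (G.scomp i (n - i) (G.gcast i (G.dcomp i (j - i) x)))

/-- the `y_i` of the section `S_G`, defined by descending recursion (with fuel). -/
def yAux (G : SGrp) (n : ℕ) (g : ∀ j : ℕ, G.obj j) : ℕ → ℕ → G.obj n
  | 0, _ => 1
  | fuel+1, i =>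
      aProd (fun j => G.ds i j (G.yAux n g fuel j)⁻¹) (i+1) n *
      dProd (fun j => G.dsTo i n (g j)) i n

/-- `W̄_n G = ∏_{j = n-1}^{0} G_j`. -/
def WbarN (G : SGrp) (n : ℕ) : Type := ∀ j : Fin n, G.obj (j:ℕ)

/-- extension of a tuple in `W̄_n G` by `1`. -/
def gE (G : SGrp) {n : ℕ} (g : G.WbarN n) : ∀ j : ℕ, G.obj j :=
  fun j => if h : j < n then g ⟨j, h⟩ else 1

/-- the coretraction `(S_G)_n : W̄_n G → Diag_n NG = (G_n)^n`. -/
def SGn (G : SGrp) (n : ℕ) (g : G.WbarN n) : Fin n → G.obj n :=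
  fun i => G.yAux n (G.gE g) n (i:ℕ)

/-- extension of a tuple in `(G_n)^n` by `1`. -/
def xE (G : SGrp) {n : ℕ} (x : Fin n → G.obj n) : ℕ → G.obj n :=
  fun j => if h : j < n then x ⟨j, h⟩ else 1

/-- the structure map `W̄_θ : W̄_n G → W̄_m G` of the Kan classifying simplicial set. -/
def wbarMap (G : SGrp) {m n : ℕ} (θ : Fin (m+1) →o Fin (n+1)) (g : G.WbarN n) : G.WbarN m :=
  fun i => dProd (fun j => G.map (restrictOH θ (i:ℕ) j) (G.gE g j))
    ((θ i.castSucc : Fin (n+1)) : ℕ) ((θ i.succ : Fin (n+1)) : ℕ)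

/-- the structure map `(Diag NG)_θ : (G_n)^n → (G_m)^m` of the diagonal of the nerve. -/
def diagMap (G : SGrp) {m n : ℕ} (θ : Fin (m+1) →o Fin (n+1)) (x : Fin n → G.obj n) :
    Fin m → G.obj m :=
  fun i => dProd (fun j => G.map θ (G.xE x j))
    ((θ i.castSucc : Fin (n+1)) : ℕ) ((θ i.succ : Fin (n+1)) : ℕ)

/-- the retraction `(D_G)_n : Diag_n NG → W̄_n G`, `(g_i)_i ↦ (g_i d_n ⋯ d_{i+1})_i`. -/
def DGn (G : SGrp) (n : ℕ) (x : Fin n → G.obj n) : G.WbarN n :=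
  fun i => G.gcast (i:ℕ) (G.dcomp (i:ℕ) (n - (i:ℕ)) (x i))

/-- the components `y_i^{(n+1-k)}` of the homotopy `H`, by descending recursion (with fuel). -/
def hAux (G : SGrp) (n k : ℕ) (g : ℕ → G.obj n) : ℕ → ℕ → G.obj n
  | 0, _ => 1
  | fuel+1, i =>
      if k ≤ i + 1 then g i
      else
        aProd (fun j => G.ds i j (G.hAux n k g fuel j)⁻¹) (i+1) (k-1) *
        dProd (fun j => G.ds i (k-1) (g j)) i (k-1)

end SGrp

/-- recover `k` from the simplex `τ^{n+1-k} ∈ Δ^1_n`: the number of vertices sent to `0`. -/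
def kOf {n : ℕ} (t : Fin (n+1) →o Fin 2) : ℕ :=
  (Finset.univ.filter (fun i => t i = 0)).card

namespace SGrp

/-- the homotopy `H_n : Diag_n NG × Δ^1_n → Diag_n NG`. -/
def Hn (G : SGrp) (n : ℕ) (x : Fin n → G.obj n) (t : Fin (n+1) →o Fin 2) : Fin n → G.obj n :=
  fun i => G.hAux n (kOf t) (G.xE x) (n+1) (i:ℕ)

end SGrp

/-- morphisms of simplicial groups. -/
structure SGrpHom (G G' : SGrp) where
  app : ∀ n, G.obj n → G'.obj n
  comm : ∀ {m n : ℕ} (θ : Fin (m+1) →o Fin (n+1)) (x : G.obj n),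
    app m (G.map θ x) = G'.map θ (app n x)
  mul : ∀ (n : ℕ) (x y : G.obj n), app n (x * y) = app n x * app n y

end Paper

/-
The components `y_i` of `H` at `τ^{n+1-k}` are the unique solution of a triangular system:
`y_j = g_j` for `j ≥ k - 1`, and for every `a < k` the product
`∏_{j=k-2}^{a} y_j d_j⋯d_{a+1} s_a⋯s_{j-1}` is prescribed by `g`. The operator
`d_j⋯d_{a+1} s_a⋯s_{j-1}` is induced by the map `[N] → [N]` collapsing `[a, j]` onto `a`, and
`θ : [m] → [n]` intertwines the collapse of `[i, j']` with that of `[θ i, j]` whenever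
`θ⁻¹[0, j] = [0, j']`. So `θ^*` carries the solution for `(g, k)` to the solution for
`(θ^* g, k')`, where `k' = #θ⁻¹[0, k)` is the parameter of `τ^{n+1-k} θ`; the values in
`(θ (k' - 1), k)`, all skipped by `θ`, are absorbed by the equation at `a = θ (k' - 1)`.
At `τ^{n+1}` the system reads `y = g`, and at `τ^0` it is the recursion defining `S_G D_G`.
-/
namespace Paper

section Products

variable {γ : Type*} [Monoid γ]

theorem dProd_of_le (f : ℕ → γ) {a b : ℕ} (h : b ≤ a) : dProd f a b = 1 := by
  cases b with
  | zero => rfl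
  | succ b => simp only [dProd, if_neg (show ¬a ≤ b by omega)]

theorem dProd_succ (f : ℕ → γ) {a b : ℕ} (h : a ≤ b) :
    dProd f a (b + 1) = f b * dProd f a b := if_pos h

theorem aProd_of_le (f : ℕ → γ) {a b : ℕ} (h : b ≤ a) : aProd f a b = 1 := by
  cases b with
  | zero => rfl
  | succ b => simp only [aProd, if_neg (show ¬a ≤ b by omega)]

theorem aProd_succ (f : ℕ → γ) {a b : ℕ} (h : a ≤ b) :
    aProd f a (b + 1) = aProd f a b * f b := if_pos h

theorem dProd_congr {f g : ℕ → γ} {a b : ℕ} (h : ∀ j, a ≤ j → j < b → f j = g j) :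
    dProd f a b = dProd g a b := by
  induction b with
  | zero => rfl
  | succ b ih =>
    by_cases hab : a ≤ b
    · rw [dProd_succ f hab, dProd_succ g hab, h b hab (by omega),
        ih fun j h1 h2 => h j h1 (by omega)]
    · rw [dProd_of_le f (by omega), dProd_of_le g (by omega)]

theorem aProd_congr {f g : ℕ → γ} {a b : ℕ} (h : ∀ j, a ≤ j → j < b → f j = g j) :
    aProd f a b = aProd g a b := by
  induction b with
  | zero => rfl
  | succ b ih =>
    by_cases hab : a ≤ b
    · rw [aProd_succ f hab, aProd_succ g hab, h b hab (by omega),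
        ih fun j h1 h2 => h j h1 (by omega)]
    · rw [aProd_of_le f (by omega), aProd_of_le g (by omega)]

theorem dProd_split (f : ℕ → γ) {a b c : ℕ} (hab : a ≤ b) (hbc : b ≤ c) :
    dProd f a c = dProd f b c * dProd f a b := by
  induction c, hbc using Nat.le_induction with
  | base => rw [dProd_of_le f le_rfl, one_mul]
  | succ c hbc ih => rw [dProd_succ f (by omega), dProd_succ f hbc, ih, mul_assoc]

theorem dProd_self_succ (f : ℕ → γ) (a : ℕ) : dProd f a (a + 1) = f a := by
  rw [dProd_succ f le_rfl, dProd_of_le f le_rfl, mul_one]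

theorem dProd_dProd_of_monotone (f : ℕ → γ) {s : ℕ → ℕ} (hs : Monotone s) {a c : ℕ}
    (hac : a ≤ c) : dProd (fun j => dProd f (s j) (s (j + 1))) a c = dProd f (s a) (s c) := by
  induction c, hac using Nat.le_induction with
  | base => rw [dProd_of_le _ le_rfl, dProd_of_le _ le_rfl]
  | succ c hac ih =>
    rw [dProd_succ _ hac, ih, ← dProd_split f (hs hac) (hs c.le_succ)]

theorem aProd_inv {γ : Type*} [Group γ] (f : ℕ → γ) (a b : ℕ) :
    (aProd f a b)⁻¹ = dProd (fun j => (f j)⁻¹) a b := by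
  induction b with
  | zero => simp [aProd, dProd]
  | succ b ih =>
    by_cases hab : a ≤ b
    · rw [aProd_succ f hab, dProd_succ _ hab, mul_inv_rev, ih]
    · rw [aProd_of_le f (by omega), dProd_of_le _ (by omega), inv_one]

end Products

theorem orderHom_ext_val {a b : ℕ} {θ₁ θ₂ : Fin (a+1) →o Fin (b+1)}
    (h : ∀ p, (θ₁ p : ℕ) = θ₂ p) : θ₁ = θ₂ :=
  OrderHom.ext _ _ (funext fun p => Fin.ext (h p))

theorem fApp_monotone {m n : ℕ} (θ : Fin (m+1) →o Fin (n+1)) : Monotone (fApp θ) :=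
  fun _ _ h => fApp_mono θ h

section FApp

variable {m n : ℕ} (θ : Fin (m+1) →o Fin (n+1)) {k k' : ℕ}

theorem fApp_succ_of_le {i : ℕ} (h : m ≤ i) : fApp θ (i+1) = fApp θ i := by
  simp only [fApp, Nat.min_eq_right h, Nat.min_eq_right (Nat.le_succ_of_le h)]

theorem le_iff_of_mem_block {j l : ℕ} (h1 : fApp θ j ≤ l) (h2 : l < fApp θ (j+1))
    (p : Fin (m+1)) : (p:ℕ) ≤ j ↔ (θ p : ℕ) ≤ l := by
  rw [← fApp_coe]
  constructor
  · intro hp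
    exact (fApp_mono θ hp).trans h1
  · intro hp
    by_contra hpj
    have := fApp_mono θ (show j + 1 ≤ p by omega)
    omega

theorem lt_iff_fApp_lt (hk' : ∀ p : Fin (m+1), (p:ℕ) < k' ↔ (θ p : ℕ) < k) {p : ℕ}
    (hp : p ≤ m) : p < k' ↔ fApp θ p < k := by
  rw [show fApp θ p = θ ⟨p, by omega⟩ from fApp_coe θ ⟨p, by omega⟩]
  exact hk' ⟨p, by omega⟩

theorem gap_of_lt_iff (hk' : ∀ p : Fin (m+1), (p:ℕ) < k' ↔ (θ p : ℕ) < k) (hk'pos : 0 < k')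
    (p : Fin (m+1)) : (θ p : ℕ) ≤ fApp θ (k'-1) ∨ k - 1 < θ p := by
  by_cases hp : (p:ℕ) < k'
  · left
    rw [← fApp_coe]
    exact fApp_mono θ (by omega)
  · right
    have := (hk' p).not.1 hp
    have := (hk' 0).1 hk'pos
    omega

end FApp

theorem kOf_le {n : ℕ} (t : Fin (n+1) →o Fin 2) : kOf t ≤ n + 1 :=
  (Finset.card_filter_le _ _).trans_eq (Finset.card_fin _)

theorem eq_zero_iff_lt_kOf {n : ℕ} (t : Fin (n+1) →o Fin 2) (j : Fin (n+1)) :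
    t j = 0 ↔ (j:ℕ) < kOf t := by
  constructor
  · intro h
    have hsub : Finset.Iic j ⊆ Finset.univ.filter (fun i => t i = 0) := fun i hi => by
      rw [Finset.mem_filter]
      exact ⟨Finset.mem_univ _, Fin.le_zero_iff.mp (h ▸ t.monotone (Finset.mem_Iic.mp hi))⟩
    have := Finset.card_le_card hsub
    rw [Fin.card_Iic] at this
    exact this
  · intro h
    by_contra hne
    have hsub : Finset.univ.filter (fun i => t i = 0) ⊆ Finset.Iio j := fun i hi => by
      rw [Finset.mem_filter] at hi
      exact Finset.mem_Iio.mpr (lt_of_not_ge fun hji =>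
        hne (Fin.le_zero_iff.mp (hi.2 ▸ t.monotone hji)))
    have := Finset.card_le_card hsub
    rw [Fin.card_Iio] at this
    exact absurd h (not_lt.2 this)

theorem lt_kOf_comp_iff {m n : ℕ} (t : Fin (n+1) →o Fin 2) (θ : Fin (m+1) →o Fin (n+1))
    (p : Fin (m+1)) : (p:ℕ) < kOf (t.comp θ) ↔ (θ p : ℕ) < kOf t := by
  rw [← eq_zero_iff_lt_kOf, ← eq_zero_iff_lt_kOf]
  rfl

theorem kOf_τOH {n c : ℕ} (hc : c ≤ n + 1) : kOf (τOH n c) = n + 1 - c := by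
  have key : ∀ j : Fin (n+1), (j:ℕ) < kOf (τOH n c) ↔ (j:ℕ) < n + 1 - c := fun j => by
    rw [← eq_zero_iff_lt_kOf]
    show (if (j:ℕ) + c ≤ n then 0 else 1 : Fin 2) = 0 ↔ _
    split_ifs <;> simp <;> omega
  have hk : kOf (τOH n c) ≤ n + 1 := kOf_le _
  rcases lt_trichotomy (kOf (τOH n c)) (n + 1 - c) with h | h | h
  · exact absurd ((key ⟨kOf (τOH n c), by omega⟩).2 h) (lt_irrefl _)
  · exact h
  · exact absurd ((key ⟨n + 1 - c, by omega⟩).1 h) (lt_irrefl _)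

/-- The map `[N] → [N]` collapsing the interval `[a, j]` onto `a`; the simplicial operator
`d_j ⋯ d_{a+1} s_a ⋯ s_{j-1}` of `SGrp.ds` is induced by it. -/
def collapseOH (a j N : ℕ) : Fin (N+1) →o Fin (N+1) where
  toFun p := ⟨if (p:ℕ) ≤ j then min (p:ℕ) a else p, by split_ifs <;> omega⟩
  monotone' p q h := by
    have : (p:ℕ) ≤ q := h
    simp only [Fin.mk_le_mk]
    split_ifs <;> omega

@[simp] theorem collapseOH_val (a j N : ℕ) (p : Fin (N+1)) :
    (collapseOH a j N p : ℕ) = if (p:ℕ) ≤ j then min (p:ℕ) a else p := rfl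

theorem collapseOH_self (a N : ℕ) : collapseOH a a N = OrderHom.id :=
  orderHom_ext_val fun p => by
    simp only [collapseOH_val, OrderHom.id_coe, id_eq]
    split_ifs <;> omega

theorem collapseOH_comp {m n : ℕ} (θ : Fin (m+1) →o Fin (n+1)) (i : ℕ) {j' j : ℕ}
    (h : ∀ p : Fin (m+1), (p:ℕ) ≤ j' ↔ (θ p : ℕ) ≤ j) :
    (collapseOH (fApp θ i) j n).comp θ = θ.comp (collapseOH i j' m) := by
  refine orderHom_ext_val fun p => ?_
  have hp := h p
  rw [← fApp_coe θ p] at hp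
  simp only [OrderHom.comp_coe, Function.comp_apply]
  rw [← fApp_coe θ (collapseOH i j' m p), collapseOH_val, collapseOH_val, ← fApp_coe θ p]
  split_ifs <;> first | omega | exact ((fApp_monotone θ).map_min).symm

theorem collapseOH_comp_of_gap {m n : ℕ} (θ : Fin (m+1) →o Fin (n+1)) {b j : ℕ}
    (hgap : ∀ p, (θ p : ℕ) ≤ b ∨ j < θ p) : (collapseOH b j n).comp θ = θ :=
  orderHom_ext_val fun p => by
    have := hgap p
    simp only [OrderHom.comp_coe, Function.comp_apply, collapseOH_val]
    split_ifs <;> omega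

theorem collapseOH_comp_collapseOH_comp_of_gap {m n : ℕ} (θ : Fin (m+1) →o Fin (n+1))
    {a b j : ℕ} (hab : a ≤ b) (hbj : b ≤ j) (hgap : ∀ p, (θ p : ℕ) ≤ b ∨ j < θ p) :
    ((collapseOH b j n).comp (collapseOH a b n)).comp θ = (collapseOH a j n).comp θ :=
  orderHom_ext_val fun p => by
    have := hgap p
    simp only [OrderHom.comp_coe, Function.comp_apply, collapseOH_val]
    split_ifs <;> omega

def dcompOH (i c N : ℕ) : Fin (N-c+1) →o Fin (N+1) where
  toFun p := ⟨min (if (p:ℕ) ≤ i then (p:ℕ) else (p:ℕ)+c) N, by omega⟩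
  monotone' p q h := by
    have : (p:ℕ) ≤ q := h
    simp only [Fin.mk_le_mk]
    split_ifs <;> omega

def scompOH (i c M : ℕ) : Fin (M+c+1) →o Fin (M+1) where
  toFun p := ⟨min (if (p:ℕ) ≤ i + c then min (p:ℕ) i else (p:ℕ)-c) M, by omega⟩
  monotone' p q h := by
    have : (p:ℕ) ≤ q := h
    simp only [Fin.mk_le_mk]
    split_ifs <;> omega

@[simp] theorem δOH_val (k a b : ℕ) (p : Fin (a+1)) :
    (δOH k a b p : ℕ) = min (if (p:ℕ) < k then (p:ℕ) else (p:ℕ)+1) b := rfl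

@[simp] theorem σOH_val (k a b : ℕ) (p : Fin (a+1)) :
    (σOH k a b p : ℕ) = min (if (p:ℕ) ≤ k then (p:ℕ) else (p:ℕ)-1) b := rfl

@[simp] theorem dcompOH_val (i c N : ℕ) (p : Fin (N-c+1)) :
    (dcompOH i c N p : ℕ) = min (if (p:ℕ) ≤ i then (p:ℕ) else (p:ℕ)+c) N := rfl

@[simp] theorem scompOH_val (i c M : ℕ) (p : Fin (M+c+1)) :
    (scompOH i c M p : ℕ) = min (if (p:ℕ) ≤ i + c then min (p:ℕ) i else (p:ℕ)-c) M := rfl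

namespace SGrp

variable (G : SGrp)

theorem map_one {m n : ℕ} (θ : Fin (m+1) →o Fin (n+1)) : G.map θ 1 = 1 :=
  (MonoidHom.mk' (G.map θ) (G.map_mul θ)).map_one

theorem map_inv {m n : ℕ} (θ : Fin (m+1) →o Fin (n+1)) (x : G.obj n) :
    G.map θ x⁻¹ = (G.map θ x)⁻¹ :=
  (MonoidHom.mk' (G.map θ) (G.map_mul θ)).map_inv x

theorem map_dProd {m n : ℕ} (θ : Fin (m+1) →o Fin (n+1)) (f : ℕ → G.obj n) (a b : ℕ) :
    G.map θ (dProd f a b) = dProd (fun j => G.map θ (f j)) a b := by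
  induction b with
  | zero => exact G.map_one θ
  | succ b ih =>
    by_cases hab : a ≤ b
    · rw [dProd_succ f hab, dProd_succ _ hab, G.map_mul, ih]
    · rw [dProd_of_le f (by omega), dProd_of_le _ (by omega), G.map_one]

theorem map_map_of_comp_eq {a b c : ℕ} {α : Fin (a+1) →o Fin (b+1)}
    {β : Fin (b+1) →o Fin (c+1)} {γ : Fin (a+1) →o Fin (c+1)} (h : β.comp α = γ)
    (x : G.obj c) :
    G.map α (G.map β x) = G.map γ x := by
  rw [G.map_comp, h]

theorem map_eq_self {n : ℕ} {θ : Fin (n+1) →o Fin (n+1)} (h : ∀ p, (θ p : ℕ) = p)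
    (x : G.obj n) : G.map θ x = x := by
  rw [orderHom_ext_val (θ₂ := OrderHom.id) h, G.map_id]

theorem gcast_map {a b n : ℕ} (h : a = b) (θ : Fin (a+1) →o Fin (n+1))
    (θ' : Fin (b+1) →o Fin (n+1)) (hθ : ∀ p (hp : p < a+1) (hp' : p < b+1),
      (θ ⟨p, hp⟩ : ℕ) = θ' ⟨p, hp'⟩) (x : G.obj n) :
    G.gcast b (G.map θ x) = G.map θ' x := by
  subst h
  rw [gcast, dif_pos rfl, orderHom_ext_val fun p => hθ p p.isLt p.isLt]

theorem dcomp_eq {N : ℕ} (i c : ℕ) (x : G.obj N) :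
    G.dcomp i c x = G.map (dcompOH i c N) x := by
  induction c generalizing i with
  | zero =>
    exact (G.map_eq_self (fun p => by simp only [dcompOH_val]; split_ifs <;> omega) x).symm
  | succ c ih =>
    rw [dcomp, ih, face, G.map_map_of_comp_eq (orderHom_ext_val fun p => ?_)]
    simp only [OrderHom.comp_coe, Function.comp_apply, δOH_val, dcompOH_val]
    split_ifs <;> omega

theorem scomp_eq {M : ℕ} (i c : ℕ) (hi : i ≤ M) (x : G.obj M) :
    G.scomp i c x = G.map (scompOH i c M) x := by
  induction c with
  | zero =>
    exact (G.map_eq_self (fun p => by simp only [scompOH_val]; split_ifs <;> omega) x).symm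
  | succ c ih =>
    rw [scomp, ih, deg, G.map_map_of_comp_eq (orderHom_ext_val fun p => ?_)]
    simp only [OrderHom.comp_coe, Function.comp_apply, σOH_val, scompOH_val, Nat.add_eq]
    split_ifs <;> omega

theorem ds_eq {N : ℕ} {a j : ℕ} (haj : a ≤ j) (hj : j ≤ N) (x : G.obj N) :
    G.ds a j x = G.map (collapseOH a j N) x := by
  rw [ds, show min (j - a) N = j - a by omega, G.dcomp_eq, G.scomp_eq a _ (by omega), G.map_comp]
  refine G.gcast_map (by omega) _ _ (fun p hp hp' => ?_) x
  simp only [OrderHom.comp_coe, Function.comp_apply, dcompOH_val, scompOH_val, collapseOH_val]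
  split_ifs <;> omega

theorem hAux_succ (N k : ℕ) (g : ℕ → G.obj N) (F i : ℕ) :
    G.hAux N k g (F+1) i = if k ≤ i + 1 then g i
      else aProd (fun j => G.ds i j (G.hAux N k g F j)⁻¹) (i+1) (k-1) *
        dProd (fun j => G.ds i (k-1) (g j)) i (k-1) := rfl

/-- Enough fuel: from index `i` the recursion never descends more than `k - i - 1` levels. -/
theorem hAux_fuel_congr (N k : ℕ) (g : ℕ → G.obj N) :
    ∀ (F F' i : ℕ), 1 ≤ F → 1 ≤ F' → k ≤ F + i + 1 → k ≤ F' + i + 1 →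
      G.hAux N k g F i = G.hAux N k g F' i := by
  intro F
  induction F with
  | zero => intro F' i h; omega
  | succ F ih =>
    intro F' i _ hF' hk hk'
    obtain ⟨F', rfl⟩ : ∃ F'', F' = F'' + 1 := ⟨F' - 1, by omega⟩
    rw [hAux_succ, hAux_succ]
    split_ifs with hki
    · rfl
    · congr 1
      exact aProd_congr fun j hj _ => by rw [ih F' j (by omega) (by omega) (by omega) (by omega)]

/-- The components `y_i` of the homotopy at the simplex `τ^{N+1-k}`, with enough fuel. -/
def hSeq (N k : ℕ) (g : ℕ → G.obj N) (i : ℕ) : G.obj N := G.hAux N k g (k+1) i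

theorem hAux_eq_hSeq {N k F i : ℕ} (g : ℕ → G.obj N) (hF : 1 ≤ F) (hk : k ≤ F + i + 1) :
    G.hAux N k g F i = G.hSeq N k g i :=
  G.hAux_fuel_congr N k g F (k+1) i hF (by omega) hk (by omega)

theorem hSeq_of_le {N k : ℕ} (g : ℕ → G.obj N) {i : ℕ} (h : k ≤ i + 1) :
    G.hSeq N k g i = g i := by
  rw [hSeq, hAux_succ, if_pos h]

theorem hSeq_of_lt {N k : ℕ} (g : ℕ → G.obj N) {i : ℕ} (h : i + 1 < k) :
    G.hSeq N k g i = aProd (fun j => G.ds i j (G.hSeq N k g j)⁻¹) (i+1) (k-1) *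
      dProd (fun j => G.ds i (k-1) (g j)) i (k-1) := by
  rw [hSeq, hAux_succ, if_neg (by omega)]
  congr 1
  exact aProd_congr fun j _ _ => by rw [G.hAux_eq_hSeq g (by omega) (by omega)]

/-- The recursion defining the components `y` of the homotopy, multiplied out:
`y_j = g_j` for `j ≥ k - 1`, and `∏_{j=k-2}^{a} y_j d_j⋯d_{a+1} s_a⋯s_{j-1}` equals
`(∏_{j=k-2}^{a} g_j) d_{k-1}⋯d_{a+1} s_a⋯s_{k-2}` for `a < k`. -/
def IsHSeq (N k : ℕ) (g y : ℕ → G.obj N) : Prop :=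
  (∀ i, k ≤ i + 1 → y i = g i) ∧
  ∀ a < k, dProd (fun j => G.map (collapseOH a j N) (y j)) a (k-1) =
    G.map (collapseOH a (k-1) N) (dProd g a (k-1))

theorem dProd_map_collapseOH {N a b : ℕ} (y : ℕ → G.obj N) (hab : a < b) :
    dProd (fun j => G.map (collapseOH a j N) (y j)) a b =
      dProd (fun j => G.map (collapseOH a j N) (y j)) (a+1) b * y a := by
  rw [dProd_split _ (Nat.le_succ a) hab, dProd_self_succ, collapseOH_self, G.map_id]

theorem isHSeq_hSeq {N k : ℕ} (hk : k ≤ N + 1) (g : ℕ → G.obj N) :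
    G.IsHSeq N k g (G.hSeq N k g) := by
  refine ⟨fun i hi => G.hSeq_of_le g hi, fun a ha => ?_⟩
  rcases Nat.lt_or_ge (a + 1) k with ha' | ha'
  · have hds : ∀ j, a ≤ j → j < k → ∀ z, G.ds a j z = G.map (collapseOH a j N) z :=
      fun j h1 h2 z => G.ds_eq h1 (by omega) z
    rw [G.dProd_map_collapseOH _ (by omega), G.hSeq_of_lt g ha',
      aProd_congr fun j h1 h2 => by rw [hds j (by omega) (by omega), G.map_inv],
      ← inv_inv (aProd _ _ _), aProd_inv, dProd_congr fun j _ _ => inv_inv _,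
      dProd_congr fun j h1 h2 => hds (k-1) (by omega) (by omega) (g j), ← G.map_dProd,
      mul_inv_cancel_left]
  · rw [show k - 1 = a by omega, dProd_of_le _ le_rfl, dProd_of_le _ le_rfl, G.map_one]

theorem eq_of_isHSeq {N k : ℕ} {g y z : ℕ → G.obj N} (hy : G.IsHSeq N k g y)
    (hz : G.IsHSeq N k g z) : y = z := by
  suffices h : ∀ d i, k ≤ i + 1 + d → y i = z i from funext fun i => h k i (by omega)
  intro d
  induction d with
  | zero => intro i hi; rw [hy.1 i hi, hz.1 i hi]
  | succ d ih =>
    intro i hi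
    rcases Nat.lt_or_ge (i + 1) k with hik | hik
    · have h := (hy.2 i (by omega)).trans (hz.2 i (by omega)).symm
      rwa [G.dProd_map_collapseOH _ (by omega), G.dProd_map_collapseOH _ (by omega),
        dProd_congr fun j hj _ => by rw [ih j (by omega)], mul_right_inj] at h
    · rw [hy.1 i hik, hz.1 i hik]

def diagMapSeq {m n : ℕ} (θ : Fin (m+1) →o Fin (n+1)) (f : ℕ → G.obj n) :
    ℕ → G.obj m :=
  fun j => dProd (fun l => G.map θ (f l)) (fApp θ j) (fApp θ (j+1))

theorem xE_diagMap {m n : ℕ} (θ : Fin (m+1) →o Fin (n+1)) (x : Fin n → G.obj n) :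
    G.xE (G.diagMap θ x) = G.diagMapSeq θ (G.xE x) := by
  funext j
  by_cases hj : j < m
  · rw [xE, dif_pos hj, diagMap, diagMapSeq, ← fApp_coe, ← fApp_coe]
    rfl
  · rw [xE, dif_neg hj, diagMapSeq, fApp_succ_of_le θ (by omega), dProd_of_le _ le_rfl]

theorem map_collapseOH_map {m n : ℕ} (θ : Fin (m+1) →o Fin (n+1)) (i : ℕ) {j' j : ℕ}
    (h : ∀ p : Fin (m+1), (p:ℕ) ≤ j' ↔ (θ p : ℕ) ≤ j) (z : G.obj n) :
    G.map (collapseOH i j' m) (G.map θ z) = G.map θ (G.map (collapseOH (fApp θ i) j n) z) := by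
  rw [G.map_comp, G.map_comp, collapseOH_comp θ i h]

theorem map_map_collapseOH_of_gap {m n : ℕ} (θ : Fin (m+1) →o Fin (n+1)) {b j : ℕ}
    (hgap : ∀ p, (θ p : ℕ) ≤ b ∨ j < θ p) (z : G.obj n) :
    G.map θ (G.map (collapseOH b j n) z) = G.map θ z := by
  rw [G.map_comp, collapseOH_comp_of_gap θ hgap]

theorem map_map_collapseOH_collapseOH_of_gap {m n : ℕ} (θ : Fin (m+1) →o Fin (n+1))
    {a b j : ℕ} (hab : a ≤ b) (hbj : b ≤ j) (hgap : ∀ p, (θ p : ℕ) ≤ b ∨ j < θ p)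
    (z : G.obj n) :
    G.map θ (G.map (collapseOH a b n) (G.map (collapseOH b j n) z)) =
      G.map θ (G.map (collapseOH a j n) z) := by
  rw [G.map_comp, G.map_comp, G.map_comp]
  exact congrArg (G.map · z) (collapseOH_comp_collapseOH_comp_of_gap θ hab hbj hgap)

section Naturality

variable {m n : ℕ} (θ : Fin (m+1) →o Fin (n+1)) {k k' : ℕ}

theorem map_dProd_map_collapseOH_of_gap {g y : ℕ → G.obj n} (hy : G.IsHSeq n k g y)
    {a b : ℕ} (hab : a ≤ b) (hbk : b < k) (hgap : ∀ p, (θ p : ℕ) ≤ b ∨ k - 1 < θ p) :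
    G.map θ (dProd (fun j => G.map (collapseOH a j n) (y j)) b (k-1)) =
      G.map θ (G.map (collapseOH a (k-1) n) (dProd g b (k-1))) := by
  have hgap' : ∀ j, j ≤ k - 1 → ∀ p, (θ p : ℕ) ≤ b ∨ j < θ p :=
    fun j hj p => (hgap p).imp_right fun h => by omega
  have h := congrArg (fun z => G.map θ (G.map (collapseOH a b n) z)) (hy.2 b hbk)
  simp only [G.map_dProd] at h
  calc G.map θ (dProd (fun j => G.map (collapseOH a j n) (y j)) b (k-1))
      = dProd (fun j => G.map θ (G.map (collapseOH a b n)
          (G.map (collapseOH b j n) (y j)))) b (k-1) := by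
        rw [G.map_dProd]
        exact dProd_congr fun j hj1 hj2 =>
          (G.map_map_collapseOH_collapseOH_of_gap θ hab hj1 (hgap' j (by omega)) _).symm
    _ = G.map θ (G.map (collapseOH a (k-1) n) (dProd g b (k-1))) := by
        rw [h, G.map_dProd, G.map_dProd]
        exact dProd_congr fun j _ _ =>
          G.map_map_collapseOH_collapseOH_of_gap θ hab (by omega) (hgap' _ le_rfl) _

theorem diagMapSeq_eq_of_le (hk' : ∀ p : Fin (m+1), (p:ℕ) < k' ↔ (θ p : ℕ) < k)
    {g y : ℕ → G.obj n} (hy : G.IsHSeq n k g y) {i : ℕ} (hi : k' ≤ i + 1) :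
    G.diagMapSeq θ y i = G.diagMapSeq θ g i := by
  rcases Nat.lt_or_ge i m with him | him
  swap
  · simp only [diagMapSeq, fApp_succ_of_le θ him, dProd_of_le _ le_rfl]
  have hpt : ∀ l, k - 1 ≤ l → G.map θ (y l) = G.map θ (g l) :=
    fun l hl => by rw [hy.1 l (by omega)]
  rcases Nat.lt_or_ge (fApp θ i + 1) k with hik | hik
  · -- here `i = k' - 1` and the block `[θ i, θ (i+1))` straddles `k - 1`; below `k - 1`
    -- its image under `θ^*` is that of `hy.2 (θ i)`
    have hik' : i < k' := (lt_iff_fApp_lt θ hk' (by omega)).2 (by omega)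
    have hk : k ≤ fApp θ (i+1) :=
      not_lt.1 fun h => by have := (lt_iff_fApp_lt θ hk' (by omega)).2 h; omega
    have hgap : ∀ j, j ≤ k - 1 → ∀ p, (θ p : ℕ) ≤ fApp θ i ∨ j < θ p := fun j _ p =>
      ((gap_of_lt_iff θ hk' (by omega) p).imp_left
        fun h => h.trans_eq (by rw [show k' - 1 = i by omega])).imp_right fun h => by omega
    have h := congrArg (G.map θ) (hy.2 (fApp θ i) (by omega))
    rw [G.map_dProd, G.map_map_collapseOH_of_gap θ (hgap _ le_rfl),
      dProd_congr fun l h1 h2 => G.map_map_collapseOH_of_gap θ (hgap l (by omega)) _,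
      G.map_dProd] at h
    rw [diagMapSeq, diagMapSeq, dProd_split _ (show fApp θ i ≤ k - 1 by omega) (by omega),
      dProd_split (fun l => G.map θ (g l)) (show fApp θ i ≤ k - 1 by omega) (by omega), h,
      dProd_congr fun l h1 _ => hpt l h1]
  · exact dProd_congr fun l hl _ => hpt l (by omega)

theorem dProd_map_collapseOH_diagMapSeq (hk' : ∀ p : Fin (m+1), (p:ℕ) < k' ↔ (θ p : ℕ) < k)
    {g y : ℕ → G.obj n} (hy : G.IsHSeq n k g y) (hk'm : k' ≤ m + 1) {i : ℕ} (hi : i < k') :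
    dProd (fun j => G.map (collapseOH i j m) (G.diagMapSeq θ y j)) i (k'-1) =
      G.map (collapseOH i (k'-1) m) (dProd (G.diagMapSeq θ g) i (k'-1)) := by
  have hab : fApp θ i ≤ fApp θ (k'-1) := fApp_mono θ (by omega)
  have hbk : fApp θ (k'-1) < k := (lt_iff_fApp_lt θ hk' (by omega)).1 (by omega)
  have hL : dProd (fun j => G.map (collapseOH i j m) (G.diagMapSeq θ y j)) i (k'-1) =
      G.map θ (dProd (fun l => G.map (collapseOH (fApp θ i) l n) (y l))
        (fApp θ i) (fApp θ (k'-1))) := by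
    rw [G.map_dProd, ← dProd_dProd_of_monotone _ (fApp_monotone θ) (by omega)]
    refine dProd_congr fun j _ _ => ?_
    rw [diagMapSeq, G.map_dProd]
    exact dProd_congr fun l h1 h2 => G.map_collapseOH_map θ i (le_iff_of_mem_block θ h1 h2) _
  have hR : G.map (collapseOH i (k'-1) m) (dProd (G.diagMapSeq θ g) i (k'-1)) =
      G.map θ (G.map (collapseOH (fApp θ i) (k-1) n)
        (dProd g (fApp θ i) (fApp θ (k'-1)))) := by
    unfold diagMapSeq
    rw [dProd_dProd_of_monotone _ (fApp_monotone θ) (by omega), ← G.map_dProd]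
    exact G.map_collapseOH_map θ i (fun p => by have := hk' p; omega) _
  -- split `hy.2 (θ i)` at `θ (k' - 1)`: above it both sides agree after `θ^*`
  have h := congrArg (G.map θ) (hy.2 (fApp θ i) (by omega))
  rw [dProd_split _ hab (show fApp θ (k'-1) ≤ k - 1 by omega),
    dProd_split g hab (show fApp θ (k'-1) ≤ k - 1 by omega), G.map_mul, G.map_mul, G.map_mul,
    G.map_dProd_map_collapseOH_of_gap θ hy hab hbk (gap_of_lt_iff θ hk' (by omega)),
    mul_right_inj] at h
  rw [hL, hR, h]

theorem isHSeq_diagMapSeq (hk' : ∀ p : Fin (m+1), (p:ℕ) < k' ↔ (θ p : ℕ) < k)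
    {g y : ℕ → G.obj n} (hy : G.IsHSeq n k g y) (hk'm : k' ≤ m + 1) :
    G.IsHSeq m k' (G.diagMapSeq θ g) (G.diagMapSeq θ y) :=
  ⟨fun _ hi => G.diagMapSeq_eq_of_le θ hk' hy hi,
    fun _ hi => G.dProd_map_collapseOH_diagMapSeq θ hk' hy hk'm hi⟩

theorem diagMapSeq_hSeq (hk' : ∀ p : Fin (m+1), (p:ℕ) < k' ↔ (θ p : ℕ) < k)
    (hk : k ≤ n + 1) (hk'm : k' ≤ m + 1) (g : ℕ → G.obj n) :
    G.diagMapSeq θ (G.hSeq n k g) = G.hSeq m k' (G.diagMapSeq θ g) :=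
  G.eq_of_isHSeq (G.isHSeq_diagMapSeq θ hk' (G.isHSeq_hSeq hk g) hk'm) (G.isHSeq_hSeq hk'm _)

end Naturality

theorem Hn_apply {n : ℕ} (x : Fin n → G.obj n) (t : Fin (n+1) →o Fin 2) (i : Fin n) :
    G.Hn n x t i = G.hSeq n (kOf t) (G.xE x) i :=
  G.hAux_eq_hSeq _ (by omega) (by have := kOf_le t; omega)

theorem xE_Hn {n : ℕ} (x : Fin n → G.obj n) (t : Fin (n+1) →o Fin 2) :
    G.xE (G.Hn n x t) = G.hSeq n (kOf t) (G.xE x) := by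
  funext j
  by_cases hj : j < n
  · rw [xE, dif_pos hj, Hn_apply]
  · rw [xE, dif_neg hj, hSeq_of_le _ _ (by have := kOf_le t; omega), xE, dif_neg hj]

theorem diagMap_apply {m n : ℕ} (θ : Fin (m+1) →o Fin (n+1)) (x : Fin n → G.obj n)
    (i : Fin m) : G.diagMap θ x i = G.diagMapSeq θ (G.xE x) i := by
  rw [← xE_diagMap, xE, dif_pos i.isLt]

theorem diagMap_Hn {m n : ℕ} (θ : Fin (m+1) →o Fin (n+1)) (x : Fin n → G.obj n)
    (t : Fin (n+1) →o Fin 2) :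
    G.diagMap θ (G.Hn n x t) = G.Hn m (G.diagMap θ x) (t.comp θ) := by
  funext i
  rw [diagMap_apply, xE_Hn, Hn_apply, xE_diagMap,
    G.diagMapSeq_hSeq θ (lt_kOf_comp_iff t θ) (kOf_le t) (kOf_le _)]

theorem Hn_τOH_succ (n : ℕ) (x : Fin n → G.obj n) : G.Hn n x (τOH n (n+1)) = x := by
  funext i
  rw [Hn_apply, kOf_τOH le_rfl, hSeq_of_le _ _ (by omega), xE, dif_pos i.isLt]

theorem gE_DGn {n : ℕ} (x : Fin n → G.obj n) {j : ℕ} (hj : j < n) :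
    G.gE (G.DGn n x) j =
      G.map (Fin.castLEOrderEmb (Nat.succ_le_succ hj.le)).toOrderHom (x ⟨j, hj⟩) := by
  rw [gE, dif_pos hj]
  show G.gcast j (G.dcomp j (n - j) (x ⟨j, hj⟩)) = _
  rw [G.dcomp_eq]
  refine G.gcast_map (by omega) _ _ (fun p hp hp' => ?_) _
  simp only [dcompOH_val, OrderEmbedding.toOrderHom_coe, Fin.castLEOrderEmb_apply,
    Fin.val_castLE]
  split_ifs <;> omega

theorem dsTo_gE_DGn {n : ℕ} (x : Fin n → G.obj n) {i j : ℕ} (hij : i ≤ j) (hj : j < n) :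
    G.dsTo i n (G.gE (G.DGn n x) j) = G.ds i n (G.xE x j) := by
  have hi : i + 1 ≤ n + 1 := by omega
  have e1 : G.gcast i (G.dcomp i (j - i) (G.gE (G.DGn n x) j)) =
      G.map (Fin.castLEOrderEmb hi).toOrderHom (x ⟨j, hj⟩) := by
    rw [gE_DGn _ _ hj, G.dcomp_eq, G.map_comp]
    refine G.gcast_map (by omega) _ _ (fun p hp hp' => ?_) _
    simp only [OrderHom.comp_coe, Function.comp_apply, dcompOH_val,
      OrderEmbedding.toOrderHom_coe, Fin.castLEOrderEmb_apply, Fin.val_castLE]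
    split_ifs <;> omega
  have e2 : G.gcast n (G.scomp i (n - i)
      (G.map (Fin.castLEOrderEmb hi).toOrderHom (x ⟨j, hj⟩))) =
      G.map (collapseOH i n n) (x ⟨j, hj⟩) := by
    rw [G.scomp_eq i _ le_rfl, G.map_comp]
    refine G.gcast_map (by omega) _ _ (fun p hp hp' => ?_) _
    simp only [OrderHom.comp_coe, Function.comp_apply, scompOH_val, collapseOH_val,
      OrderEmbedding.toOrderHom_coe, Fin.castLEOrderEmb_apply, Fin.val_castLE]
    split_ifs <;> omega
  rw [dsTo, e1, e2, xE, dif_pos hj, G.ds_eq (by omega) le_rfl]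

theorem yAux_DGn {n : ℕ} (x : Fin n → G.obj n) :
    ∀ F i, G.yAux n (G.gE (G.DGn n x)) F i = G.hAux n (n+1) (G.xE x) F i := by
  intro F
  induction F with
  | zero => intro i; rfl
  | succ F ih =>
    intro i
    rw [yAux, hAux_succ]
    by_cases hi : n ≤ i
    · rw [if_pos (by omega), aProd_of_le _ (by omega), dProd_of_le _ hi, one_mul, xE,
        dif_neg (by omega)]
    · rw [if_neg (by omega), Nat.add_sub_cancel, aProd_congr fun j _ _ => by rw [ih j]]
      exact congrArg _ (dProd_congr fun j h1 h2 => G.dsTo_gE_DGn x h1 h2)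

theorem Hn_τOH_zero (n : ℕ) (x : Fin n → G.obj n) :
    G.Hn n x (τOH n 0) = G.SGn n (G.DGn n x) := by
  funext i
  rw [Hn_apply, kOf_τOH (Nat.zero_le _), Nat.sub_zero, SGn, yAux_DGn,
    G.hAux_eq_hSeq _ (by have := i.isLt; omega) (by omega)]

end SGrp

end Paper

open Paper Paper.SGrp in
/-- `H` is a simplicial homotopy from `D_G S_G` to `id_{Diag NG}`:
it is a simplicial map with `ins_0 H = D_G S_G` and `ins_1 H = id`. -/
theorem stmt_16 (G : SGrp) :
    (∀ {m n : ℕ} (θ : Fin (m+1) →o Fin (n+1)) (x : Fin n → G.obj n) (t : Fin (n+1) →o Fin 2),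
      G.diagMap θ (G.Hn n x t) = G.Hn m (G.diagMap θ x) (t.comp θ)) ∧
    (∀ (n : ℕ) (x : Fin n → G.obj n), G.Hn n x (τOH n 0) = G.SGn n (G.DGn n x)) ∧
    (∀ (n : ℕ) (x : Fin n → G.obj n), G.Hn n x (τOH n (n+1)) = x) :=
  ⟨G.diagMap_Hn, G.Hn_τOH_zero, G.Hn_τOH_succ⟩
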